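/- arXiv:2012.14980 — 5 statements merged into one kernel-verified Lean document; each statement's English description precedes it below -/
import Mathlib

section
/- Let r > 1, ψ ∈ ℝ, and for θ with θ − ψ ∈ [0, arccos(1/r)] set x(θ) = sqrt(r² + 1 − 2 r cos(θ − ψ)) and β(θ) = arcsin((r cos(θ − ψ) − 1)/x(θ)). Then β(θ) ∈ [0, π/2] for all such θ, β(ψ) = π/2, β(ψ + arccos(1/r)) = 0, and the function θ ↦ β(θ) is strictly decreasing (hence injective) on the interval [ψ, ψ + arccos(1/r)]. -/
open Real Set

/-!
Writing `c = cos (θ - ψ)`, the quantity under the arcsine is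
`s(c) = (r c - 1) / √(r² + 1 - 2 r c)`. As `θ - ψ` runs over `[0, arccos (1/r)]`, `c` decreases
from `1` to `1/r`; on `[1/r, 1]` the numerator of `s` is nonnegative and increasing while its
denominator is positive and decreasing, so `s` increases from `0` to `1`, and `s ≤ 1` amounts to
`r² c² ≤ r²`. Composing with the increasing arcsine gives the claims.
-/

namespace ApproachAngle

/-- The sine of the approach angle, as a function of `c = cos (θ - ψ)`. -/
noncomputable def approachSin (r c : ℝ) : ℝ := (r * c - 1) / √(r ^ 2 + 1 - 2 * r * c)

variable {r c : ℝ}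

lemma sq_add_one_sub_two_mul_pos (hr : 1 < r) (hc : c ≤ 1) : 0 < r ^ 2 + 1 - 2 * r * c := by
  nlinarith

lemma approachSin_nonneg (hr : 0 < r) (hc : 1 / r ≤ c) : 0 ≤ approachSin r c := by
  have : 1 ≤ r * c := by rwa [div_le_iff₀' hr] at hc
  exact div_nonneg (by linarith) (sqrt_nonneg _)

lemma approachSin_le_one (hc₀ : -1 ≤ c) (hc₁ : c ≤ 1) : approachSin r c ≤ 1 := by
  have hsq : (r * c - 1) ^ 2 ≤ r ^ 2 + 1 - 2 * r * c := by
    nlinarith [mul_le_mul_of_nonneg_left (abs_le_one_iff_mul_self_le_one.1 (abs_le.2 ⟨hc₀, hc₁⟩))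
      (sq_nonneg r)]
  refine div_le_one_of_le₀ ?_ (sqrt_nonneg _)
  calc r * c - 1 ≤ |r * c - 1| := le_abs_self _
    _ = √((r * c - 1) ^ 2) := (sqrt_sq_eq_abs _).symm
    _ ≤ √(r ^ 2 + 1 - 2 * r * c) := sqrt_le_sqrt hsq

lemma mapsTo_approachSin (hr : 0 < r) : MapsTo (approachSin r) (Icc (1 / r) 1) (Icc 0 1) :=
  fun _ hc => ⟨approachSin_nonneg hr hc.1,
    approachSin_le_one (by linarith [hc.1, one_div_pos.2 hr]) hc.2⟩

lemma approachSin_one (hr : 1 < r) : approachSin r 1 = 1 := by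
  rw [approachSin, show r ^ 2 + 1 - 2 * r * 1 = (r - 1) ^ 2 by ring,
    sqrt_sq (by linarith), mul_one, div_self (by linarith)]

lemma approachSin_one_div (hr : r ≠ 0) : approachSin r (1 / r) = 0 := by
  rw [approachSin, mul_one_div_cancel hr, sub_self, zero_div]

lemma strictMonoOn_approachSin (hr : 1 < r) : StrictMonoOn (approachSin r) (Icc (1 / r) 1) := by
  intro c₁ hc₁ c₂ hc₂ hlt
  have hr₀ : 0 < r := by linarith
  have hnum : 0 ≤ r * c₁ - 1 := by
    have := (div_le_iff₀' hr₀).1 hc₁.1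
    linarith
  have hden : √(r ^ 2 + 1 - 2 * r * c₂) ≤ √(r ^ 2 + 1 - 2 * r * c₁) :=
    sqrt_le_sqrt (by nlinarith)
  exact div_lt_div₀ (by nlinarith) hden (by linarith [mul_lt_mul_of_pos_left hlt hr₀])
    (sqrt_pos.2 (sq_add_one_sub_two_mul_pos hr hc₂.2))

lemma mapsTo_cos_Icc_arccos {a : ℝ} (ha₀ : -1 ≤ a) (ha₁ : a ≤ 1) :
    MapsTo cos (Icc 0 (arccos a)) (Icc a 1) := fun t ht => by
  refine ⟨?_, cos_le_one t⟩
  calc a = cos (arccos a) := (cos_arccos ha₀ ha₁).symm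
    _ ≤ cos t := cos_le_cos_of_nonneg_of_le_pi ht.1 (arccos_le_pi a) ht.2

end ApproachAngle

open ApproachAngle in
/-- For `r > 1` and `θ − ψ ∈ [0, arccos (1/r)]`, with
`x(θ) = √(r² + 1 − 2 r cos (θ − ψ))` and `β(θ) = arcsin ((r cos (θ − ψ) − 1) / x(θ))`:
`β(θ) ∈ [0, π/2]`, `β(ψ) = π/2`, `β(ψ + arccos (1/r)) = 0`, and `β` is strictly
decreasing (hence injective) on `[ψ, ψ + arccos (1/r)]`. -/
theorem approach_angle_monotone (r ψ : ℝ) (hr : 1 < r) (x β : ℝ → ℝ)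
    (hx : ∀ θ, x θ = Real.sqrt (r ^ 2 + 1 - 2 * r * Real.cos (θ - ψ)))
    (hβ : ∀ θ, β θ = Real.arcsin ((r * Real.cos (θ - ψ) - 1) / x θ)) :
    (∀ θ, θ - ψ ∈ Set.Icc 0 (Real.arccos (1 / r)) → β θ ∈ Set.Icc 0 (π / 2)) ∧
    β ψ = π / 2 ∧
    β (ψ + Real.arccos (1 / r)) = 0 ∧
    StrictAntiOn β (Set.Icc ψ (ψ + Real.arccos (1 / r))) := by
  have hr₀ : 0 < r := by linarith
  have hr₁ : 1 / r ≤ 1 := (div_le_one hr₀).2 hr.le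
  have hcos := mapsTo_cos_Icc_arccos (by linarith [one_div_pos.2 hr₀]) hr₁
  obtain rfl : β = fun θ => arcsin (approachSin r (cos (θ - ψ))) :=
    funext fun θ => by rw [hβ, hx, approachSin]
  have hshift : MapsTo (· - ψ) (Icc ψ (ψ + arccos (1 / r))) (Icc 0 (arccos (1 / r))) :=
    fun θ hθ => ⟨by linarith [hθ.1], by linarith [hθ.2]⟩
  refine ⟨fun θ hθ => ?_, ?_, ?_, ?_⟩
  · exact ⟨arcsin_nonneg.2 (mapsTo_approachSin hr₀ (hcos hθ)).1, arcsin_le_pi_div_two _⟩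
  · simp [approachSin_one hr]
  · simp only [add_sub_cancel_left, cos_arccos (by linarith [one_div_pos.2 hr₀]) hr₁,
      approachSin_one_div hr₀.ne', arcsin_zero]
  · have hcosAnti : StrictAntiOn (cos ∘ (· - ψ)) (Icc ψ (ψ + arccos (1 / r))) :=
      (strictAntiOn_cos.mono (Icc_subset_Icc_right (arccos_le_pi _))).comp_strictMonoOn
        (fun _ _ _ _ h => sub_lt_sub_right h ψ) hshift
    have hsinAnti := (strictMonoOn_approachSin hr).comp_strictAntiOn hcosAnti (hcos.comp hshift)
    exact strictMonoOn_arcsin.comp_strictAntiOn hsinAnti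
      (((mapsTo_approachSin hr₀).comp (hcos.comp hshift)).mono_right
        (Icc_subset_Icc (by norm_num) le_rfl))
end

section
/- Let r > 1, ψ ∈ ℝ, and for θ with θ − ψ ∈ [0, arccos(1/r)] set x(θ) = sqrt(r² + 1 − 2 r cos(θ − ψ)) and β(θ) = arcsin((r cos(θ − ψ) − 1)/x(θ)). Then x(θ) = −sin β(θ) + sqrt(r² − cos² β(θ)). -/
open Real

/-! By the law of cosines in the triangle formed by the origin, the intruder `A` and the
breaching point `B`, whose angle at `B` is `π/2 + β`, the distance `x = |AB|` satisfies
`r² = x² + 1 + 2 x sin β`. So `x` is the nonnegative root of `x² + 2 x sin β − (r² − 1)`,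
namely `−sin β + √(sin² β + r² − 1) = −sin β + √(r² − cos² β)`. -/

theorem eq_neg_add_sqrt_of_sq_add_two_mul_eq {X s d : ℝ} (hXs : 0 ≤ X + s)
    (h : X ^ 2 + 2 * X * s = d) : X = -s + √(d + s ^ 2) := by
  rw [← h, show X ^ 2 + 2 * X * s + s ^ 2 = (X + s) ^ 2 by ring, sqrt_sq hXs]
  ring

theorem Real.cos_arcsin_sq {s : ℝ} (h₁ : -1 ≤ s) (h₂ : s ≤ 1) :
    cos (arcsin s) ^ 2 = 1 - s ^ 2 := by
  rw [cos_arcsin, sq_sqrt (by nlinarith)]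

section LawOfCosines

variable {r c X : ℝ}

theorem abs_mul_sub_one_div_le_one (hc : c ^ 2 ≤ 1) (hX : 0 < X)
    (hX2 : X ^ 2 = r ^ 2 + 1 - 2 * r * c) : |(r * c - 1) / X| ≤ 1 := by
  rw [abs_div, abs_of_pos hX, div_le_one hX]
  -- `X² = (r c − 1)² + r² (1 − c²)`
  exact abs_le_of_sq_le_sq (by nlinarith [sq_nonneg r]) hX.le

theorem sq_add_two_mul_mul_div_eq (hX : X ≠ 0) (hX2 : X ^ 2 = r ^ 2 + 1 - 2 * r * c) :
    X ^ 2 + 2 * X * ((r * c - 1) / X) = r ^ 2 - 1 := by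
  field_simp
  linear_combination hX2

theorem add_mul_sub_one_div_nonneg (hr : 0 ≤ r) (hcr : c ≤ r) (hX : 0 < X)
    (hX2 : X ^ 2 = r ^ 2 + 1 - 2 * r * c) : 0 ≤ X + (r * c - 1) / X := by
  have : X + (r * c - 1) / X = r * (r - c) / X := by
    field_simp
    linear_combination hX2
  rw [this]
  exact div_nonneg (mul_nonneg hr (sub_nonneg.2 hcr)) hX.le

end LawOfCosines

theorem distance_from_approach_angle_general (r ψ θ : ℝ) (hr : 1 < r)
    (x β : ℝ → ℝ)
    (hx : ∀ θ, x θ = Real.sqrt (r ^ 2 + 1 - 2 * r * Real.cos (θ - ψ)))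
    (hβ : ∀ θ, β θ = Real.arcsin ((r * Real.cos (θ - ψ) - 1) / x θ)) :
    x θ = -Real.sin (β θ) + Real.sqrt (r ^ 2 - Real.cos (β θ) ^ 2) := by
  set c := cos (θ - ψ)
  have hc : c ≤ 1 := cos_le_one _
  have hA : 0 < r ^ 2 + 1 - 2 * r * c := by nlinarith
  have hX : 0 < x θ := hx θ ▸ sqrt_pos.2 hA
  have hX2 : x θ ^ 2 = r ^ 2 + 1 - 2 * r * c := hx θ ▸ sq_sqrt hA.le
  obtain ⟨h₁, h₂⟩ := abs_le.1 (abs_mul_sub_one_div_le_one (cos_sq_le_one _) hX hX2)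
  rw [hβ θ, sin_arcsin h₁ h₂, cos_arcsin_sq h₁ h₂, sub_sub_eq_add_sub, add_sub_right_comm]
  exact eq_neg_add_sqrt_of_sq_add_two_mul_eq
    (add_mul_sub_one_div_nonneg (by linarith) (by linarith) hX hX2)
    (sq_add_two_mul_mul_div_eq hX.ne' hX2)

/-- With `x(θ) = √(r² + 1 − 2 r cos (θ − ψ))` and
`β(θ) = arcsin ((r cos (θ − ψ) − 1)/x(θ))`, for `θ − ψ ∈ [0, arccos (1/r)]` one has
`x(θ) = −sin β(θ) + √(r² − cos² β(θ))`. -/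
theorem distance_from_approach_angle (r ψ θ : ℝ) (hr : 1 < r)
    (hθ : θ - ψ ∈ Set.Icc 0 (Real.arccos (1 / r)))
    (x β : ℝ → ℝ)
    (hx : ∀ θ, x θ = Real.sqrt (r ^ 2 + 1 - 2 * r * Real.cos (θ - ψ)))
    (hβ : ∀ θ, β θ = Real.arcsin ((r * Real.cos (θ - ψ) - 1) / x θ)) :
    x θ = -Real.sin (β θ) + Real.sqrt (r ^ 2 - Real.cos (β θ) ^ 2) :=
  distance_from_approach_angle_general r ψ θ hr x β hx hβ
end

section
/- Let r > 1, ψ ∈ ℝ, and for θ with θ − ψ ∈ [0, arccos(1/r)] set x(θ) = sqrt(r² + 1 − 2 r cos(θ − ψ)) and β(θ) = arcsin((r cos(θ − ψ) − 1)/x(θ)). Then θ = ψ − β(θ) + arccos(cos β(θ) / r). -/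
/-!
With `φ = θ - ψ`, `X = √(r² + 1 - 2 r cos φ)` is the distance from the intruder to the breaching
point, and `(r cos φ - 1, r sin φ)` are the components of that segment along the radius and the
tangent at the breaching point. Hence `sin β = (r cos φ - 1) / X` and `cos β = r sin φ / X`, and the
addition formula gives `cos (φ + β) = sin φ / X = cos β / r`. For `φ ∈ [0, arccos (1/r)]` both `φ`
and `β` lie in `[0, π/2]`, so `arccos (cos β / r) = φ + β`.
-/

open Real

namespace Breaching

/-- The paper's `β(θ)` as a function of `φ = θ - ψ`. -/
noncomputable def approachAngle (r φ : ℝ) : ℝ :=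
  arcsin ((r * cos φ - 1) / √(r ^ 2 + 1 - 2 * r * cos φ))

variable {r φ : ℝ}

theorem mul_cos_sub_one_sq_add_mul_sin_sq (r φ : ℝ) :
    (r * cos φ - 1) ^ 2 + (r * sin φ) ^ 2 = r ^ 2 + 1 - 2 * r * cos φ := by
  linear_combination r ^ 2 * sin_sq_add_cos_sq φ

theorem sq_sub_two_mul_cos_add_one_pos (hr : 1 < r) : 0 < r ^ 2 + 1 - 2 * r * cos φ := by
  nlinarith [cos_le_one φ]

theorem sin_approachAngle (r φ : ℝ) :
    sin (approachAngle r φ) = (r * cos φ - 1) / √(r ^ 2 + 1 - 2 * r * cos φ) := by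
  have hle : |r * cos φ - 1| ≤ √(r ^ 2 + 1 - 2 * r * cos φ) :=
    abs_le_sqrt (by nlinarith [mul_cos_sub_one_sq_add_mul_sin_sq r φ])
  have habs : |(r * cos φ - 1) / √(r ^ 2 + 1 - 2 * r * cos φ)| ≤ 1 := by
    rw [abs_div, abs_of_nonneg (sqrt_nonneg _)]
    exact div_le_one_of_le₀ hle (sqrt_nonneg _)
  exact sin_arcsin (abs_le.mp habs).1 (abs_le.mp habs).2

theorem cos_approachAngle (hr : 1 < r) :
    cos (approachAngle r φ) = |r * sin φ| / √(r ^ 2 + 1 - 2 * r * cos φ) := by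
  have hX := sq_sub_two_mul_cos_add_one_pos (φ := φ) hr
  rw [approachAngle, cos_arcsin, div_pow, sq_sqrt hX.le, ← mul_cos_sub_one_sq_add_mul_sin_sq,
    one_sub_div (by rw [mul_cos_sub_one_sq_add_mul_sin_sq]; exact hX.ne'), add_sub_cancel_left,
    sqrt_div (sq_nonneg _), sqrt_sq_eq_abs]

theorem cos_add_approachAngle (hr : 1 < r) (hφ : 0 ≤ sin φ) :
    cos (φ + approachAngle r φ) = cos (approachAngle r φ) / r := by
  have hX := sq_sub_two_mul_cos_add_one_pos (φ := φ) hr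
  rw [cos_add, sin_approachAngle, cos_approachAngle hr,
    abs_of_nonneg (mul_nonneg (by linarith) hφ)]
  field_simp
  ring

theorem one_le_mul_cos_of_le_arccos_inv (hr : 1 ≤ r) (h0 : 0 ≤ φ) (h1 : φ ≤ arccos (1 / r)) :
    1 ≤ r * cos φ := by
  have hr0 : 0 < r := by linarith
  have hcos : cos (arccos (1 / r)) ≤ cos φ :=
    cos_le_cos_of_nonneg_of_le_pi h0 (arccos_le_pi _) h1
  rw [cos_arccos (by linarith [one_div_pos.mpr hr0]) (div_le_one_of_le₀ hr hr0.le)] at hcos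
  rwa [div_le_iff₀' hr0] at hcos

theorem approachAngle_nonneg (h : 1 ≤ r * cos φ) : 0 ≤ approachAngle r φ :=
  arcsin_nonneg.mpr (div_nonneg (by linarith) (sqrt_nonneg _))

theorem arccos_cos_approachAngle_div (hr : 1 < r) (hφ : φ ∈ Set.Icc 0 (arccos (1 / r))) :
    arccos (cos (approachAngle r φ) / r) = φ + approachAngle r φ := by
  obtain ⟨h0, h1⟩ := hφ
  have hφ_le : φ ≤ π / 2 :=
    h1.trans (arccos_le_pi_div_two.mpr (one_div_pos.mpr (by linarith)).le)
  have hβ0 := approachAngle_nonneg (one_le_mul_cos_of_le_arccos_inv hr.le h0 h1)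
  have hβ_le : approachAngle r φ ≤ π / 2 := arcsin_le_pi_div_two _
  rw [← cos_add_approachAngle hr (sin_nonneg_of_nonneg_of_le_pi h0 (by linarith [pi_pos]))]
  exact arccos_cos (by linarith) (by linarith)

end Breaching

open Breaching in
/-- With `x(θ) = √(r² + 1 − 2 r cos (θ − ψ))` and
`β(θ) = arcsin ((r cos (θ − ψ) − 1)/x(θ))`, for `θ − ψ ∈ [0, arccos (1/r)]` the
breaching angle satisfies `θ = ψ − β(θ) + arccos (cos β(θ) / r)`. -/
theorem breaching_angle_from_beta (r ψ θ : ℝ) (hr : 1 < r)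
    (hθ : θ - ψ ∈ Set.Icc 0 (Real.arccos (1 / r)))
    (x β : ℝ → ℝ)
    (hx : ∀ θ, x θ = Real.sqrt (r ^ 2 + 1 - 2 * r * Real.cos (θ - ψ)))
    (hβ : ∀ θ, β θ = Real.arcsin ((r * Real.cos (θ - ψ) - 1) / x θ)) :
    θ = ψ - β θ + Real.arccos (Real.cos (β θ) / r) := by
  have hβθ : β θ = approachAngle r (θ - ψ) := by rw [hβ, hx, approachAngle]
  rw [hβθ, arccos_cos_approachAngle_div hr hθ]
  ring
end

section
/- Let r > 1, ν ∈ (0, 1], φ_D ∈ (0, π/2], ψ ∈ [0, π/2). For θ with θ − ψ ∈ [0, arccos(1/r)] define x(θ) = sqrt(r² + 1 − 2 r cos(θ − ψ)), β(θ) = arcsin((r cos(θ − ψ) − 1)/x(θ)), and the payoff p(θ) = arccos(cos φ_D cos θ) − x(θ)/ν. If θ* is an interior point of [ψ, ψ + arccos(1/r)] at which p attains its maximum over this interval, then cos β(θ*) = ν cos φ_D sin θ* / sqrt(1 − cos² φ_D cos² θ*); equivalently, the optimal approach angle satisfies β(θ*) = arccos(ν cos φ_D sin θ* / sqrt(1 −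 cos² φ_D cos² θ*)). -/
/-!
At an interior maximiser the derivative of the payoff vanishes. The defender term contributes
`cos φ_D sin θ / √(1 - cos² φ_D cos² θ)`, the intruder term `r sin (θ - ψ) / (ν x(θ))`. In the
right triangle with legs `r cos (θ - ψ) - 1` and `r sin (θ - ψ)` and hypotenuse `x(θ)`, the latter
quotient `r sin (θ - ψ) / x(θ)` is `cos β(θ)`; and `β(θ*) ∈ [0, π/2]` because
`θ* - ψ ≤ arccos (1/r)` makes the opposite leg nonnegative.
-/

open Real

lemma sq_add_one_sub_two_mul_cos_pos {r : ℝ} (hr₀ : 0 ≤ r) (hr₁ : r ≠ 1) (t : ℝ) :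
    0 < r ^ 2 + 1 - 2 * r * cos t := by
  have : 0 < (r - 1) ^ 2 := by positivity [sub_ne_zero.mpr hr₁]
  nlinarith [cos_le_one t]

lemma le_cos_of_le_arccos {a t : ℝ} (ha₁ : -1 ≤ a) (ha₂ : a ≤ 1) (ht₀ : 0 ≤ t)
    (ht : t ≤ arccos a) : a ≤ cos t := by
  simpa only [cos_arccos ha₁ ha₂] using
    cos_le_cos_of_nonneg_of_le_pi ht₀ (arccos_le_pi a) ht

lemma hasDerivAt_arccos_const_mul_cos {c θ : ℝ} (h : c ^ 2 * cos θ ^ 2 < 1) :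
    HasDerivAt (fun θ => arccos (c * cos θ)) (c * sin θ / √(1 - c ^ 2 * cos θ ^ 2)) θ := by
  have hne : ∀ s : ℝ, s ^ 2 = 1 → c * cos θ ≠ s := fun s hs he => by
    rw [← he] at hs; nlinarith
  have hchain : HasDerivAt (fun θ => arccos (c * cos θ))
      (-(1 / √(1 - (c * cos θ) ^ 2)) * (c * -sin θ)) θ := by
    -- elaborated against the expected type, `comp` would unfold `arccos` to `π / 2 - arcsin`
    have := (hasDerivAt_arccos (hne (-1) (by norm_num)) (hne 1 (by norm_num))).comp θ
      ((hasDerivAt_cos θ).const_mul c)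
    exact this
  convert hchain using 1
  rw [mul_pow]
  ring

lemma hasDerivAt_sqrt_sq_add_one_sub_two_mul_cos_sub {r ψ θ : ℝ}
    (h : r ^ 2 + 1 - 2 * r * cos (θ - ψ) ≠ 0) :
    HasDerivAt (fun θ => √(r ^ 2 + 1 - 2 * r * cos (θ - ψ)))
      (r * sin (θ - ψ) / √(r ^ 2 + 1 - 2 * r * cos (θ - ψ))) θ := by
  have hcos : HasDerivAt (fun θ => cos (θ - ψ)) (-sin (θ - ψ)) θ := by
    simpa using ((hasDerivAt_id θ).sub_const ψ).cos
  convert ((hcos.const_mul (2 * r)).const_sub (r ^ 2 + 1)).sqrt h using 1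
  field_simp

lemma cos_arcsin_div_sqrt_sq_add_one_sub_two_mul_cos {r t : ℝ}
    (hx : 0 < r ^ 2 + 1 - 2 * r * cos t) (hrs : 0 ≤ r * sin t) :
    cos (arcsin ((r * cos t - 1) / √(r ^ 2 + 1 - 2 * r * cos t)))
      = r * sin t / √(r ^ 2 + 1 - 2 * r * cos t) := by
  have hpos : 0 < √(r ^ 2 + 1 - 2 * r * cos t) := sqrt_pos.mpr hx
  have hlegs : 1 - ((r * cos t - 1) / √(r ^ 2 + 1 - 2 * r * cos t)) ^ 2
      = (r * sin t / √(r ^ 2 + 1 - 2 * r * cos t)) ^ 2 := by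
    rw [div_pow, div_pow, sq_sqrt hx.le, eq_div_iff hx.ne', one_sub_div hx.ne',
      div_mul_cancel₀ _ hx.ne']
    nlinarith [sin_sq_add_cos_sq t]
  rw [cos_arcsin, hlegs, sqrt_sq (div_nonneg hrs hpos.le)]

theorem optimal_approach_angle_general (r ν φD ψ θs : ℝ) (hr : 1 < r)
    (hν : ν ∈ Set.Ioc 0 1) (hφ : φD ∈ Set.Ioc 0 (π / 2))
    (x β p : ℝ → ℝ)
    (hx : ∀ θ, x θ = Real.sqrt (r ^ 2 + 1 - 2 * r * Real.cos (θ - ψ)))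
    (hβ : ∀ θ, β θ = Real.arcsin ((r * Real.cos (θ - ψ) - 1) / x θ))
    (hp : ∀ θ, p θ = Real.arccos (Real.cos φD * Real.cos θ) - x θ / ν)
    (hθs : θs ∈ Set.Ioo ψ (ψ + Real.arccos (1 / r)))
    (hmax : IsMaxOn p (Set.Icc ψ (ψ + Real.arccos (1 / r))) θs) :
    Real.cos (β θs)
      = ν * Real.cos φD * Real.sin θs / Real.sqrt (1 - Real.cos φD ^ 2 * Real.cos θs ^ 2) ∧
    β θs = Real.arccos
      (ν * Real.cos φD * Real.sin θs / Real.sqrt (1 - Real.cos φD ^ 2 * Real.cos θs ^ 2)) := by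
  obtain ⟨hθψ, hθr⟩ := hθs
  have hr₀ : 0 < r := by linarith
  have hX := sq_add_one_sub_two_mul_cos_pos hr₀.le hr.ne' (θs - ψ)
  have hsin : 0 < sin (θs - ψ) :=
    sin_pos_of_pos_of_lt_pi (by linarith) (by linarith [arccos_le_pi (1 / r)])
  have hcos : 1 ≤ r * cos (θs - ψ) := (div_le_iff₀' hr₀).mp <|
    le_cos_of_le_arccos (by linarith [one_div_pos.mpr hr₀]) ((div_le_one hr₀).mpr hr.le)
      (by linarith) (by linarith)
  have hcosφ : cos φD ^ 2 * cos θs ^ 2 < 1 := by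
    have := sin_pos_of_pos_of_lt_pi hφ.1 (by linarith [hφ.2, pi_pos])
    nlinarith [sin_sq_add_cos_sq φD, cos_sq_le_one θs]
  have hderiv : HasDerivAt p (cos φD * sin θs / √(1 - cos φD ^ 2 * cos θs ^ 2)
      - r * sin (θs - ψ) / x θs / ν) θs := by
    rw [funext hp, funext hx]
    exact (hasDerivAt_arccos_const_mul_cos hcosφ).sub
      ((hasDerivAt_sqrt_sq_add_one_sub_two_mul_cos_sub hX.ne').div_const ν)
  have hfoc := (hmax.isLocalMax (Icc_mem_nhds hθψ hθr)).hasDerivAt_eq_zero hderiv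
  have hS : 0 < √(1 - cos φD ^ 2 * cos θs ^ 2) := sqrt_pos.mpr (by linarith)
  have hcosβ : cos (β θs) = ν * cos φD * sin θs / √(1 - cos φD ^ 2 * cos θs ^ 2) := by
    rw [hβ, hx, cos_arcsin_div_sqrt_sq_add_one_sub_two_mul_cos hX (by positivity), ← hx]
    have hν : ν ≠ 0 := hν.1.ne'
    field_simp at hfoc ⊢
    linarith
  refine ⟨hcosβ, ?_⟩
  have hβ₀ : 0 ≤ β θs := by
    rw [hβ, hx, arcsin_nonneg]
    exact div_nonneg (by linarith) (sqrt_nonneg _)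
  have hβπ : β θs ≤ π := hβ θs ▸ (arcsin_le_pi_div_two _).trans (by linarith [pi_pos])
  rw [← hcosβ, arccos_cos hβ₀ hβπ]

/-- First-order optimality condition: if `θ*` is an interior maximizer of the payoff
`p(θ) = arccos (cos φ_D cos θ) − x(θ)/ν` over `[ψ, ψ + arccos (1/r)]`, then the
optimal approach angle satisfies
`cos β(θ*) = ν cos φ_D sin θ* / √(1 − cos² φ_D cos² θ*)`, equivalently
`β(θ*) = arccos (ν cos φ_D sin θ* / √(1 − cos² φ_D cos² θ*))`. -/
theorem optimal_approach_angle (r ν φD ψ θs : ℝ) (hr : 1 < r)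
    (hν : ν ∈ Set.Ioc 0 1) (hφ : φD ∈ Set.Ioc 0 (π / 2)) (hψ : ψ ∈ Set.Ico 0 (π / 2))
    (x β p : ℝ → ℝ)
    (hx : ∀ θ, x θ = Real.sqrt (r ^ 2 + 1 - 2 * r * Real.cos (θ - ψ)))
    (hβ : ∀ θ, β θ = Real.arcsin ((r * Real.cos (θ - ψ) - 1) / x θ))
    (hp : ∀ θ, p θ = Real.arccos (Real.cos φD * Real.cos θ) - x θ / ν)
    (hθs : θs ∈ Set.Ioo ψ (ψ + Real.arccos (1 / r)))
    (hmax : IsMaxOn p (Set.Icc ψ (ψ + Real.arccos (1 / r))) θs) :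
    Real.cos (β θs)
      = ν * Real.cos φD * Real.sin θs / Real.sqrt (1 - Real.cos φD ^ 2 * Real.cos θs ^ 2) ∧
    β θs = Real.arccos
      (ν * Real.cos φD * Real.sin θs / Real.sqrt (1 - Real.cos φD ^ 2 * Real.cos θs ^ 2)) :=
  optimal_approach_angle_general r ν φD ψ θs hr hν hφ x β p hx hβ hp hθs hmax
end

section
/- Let r > 1, ψ ∈ ℝ, and for θ with θ − ψ ∈ [0, arccos(1/r)] set x(θ) = sqrt(r² + 1 − 2 r cos(θ − ψ)) and β(θ) = arcsin((r cos(θ − ψ) − 1)/x(θ)). Then r cos(θ − ψ) = sin β(θ) · sqrt(r² − cos² β(θ)) + cos² β(θ). -/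
/-!
With `c = cos (θ - ψ)` and `x² = r² + 1 - 2rc` one has `x² - (rc - 1)² = r² (1 - c²) ≥ 0`,
so `s = (rc - 1)/x` lies in `[-1, 1]` and `sin β = s`, `cos² β = 1 - s²`. Then `r² - cos² β = (r (r - c)/x)²`, and the claim becomes the
rational identity `s · r (r - c)/x + 1 - s² = rc`, which is again `x² = r² + 1 - 2rc`.
-/

open Real

namespace ApproachAngle

lemma cos_arcsin_sq {s : ℝ} (hs : s ^ 2 ≤ 1) : cos (arcsin s) ^ 2 = 1 - s ^ 2 := by
  rw [cos_arcsin, sq_sqrt (by linarith)]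

variable {r c x : ℝ}

lemma div_sq_le_one (hc : c ^ 2 ≤ 1) (hx : 0 < x) (hx2 : x ^ 2 = r ^ 2 + 1 - 2 * r * c) :
    ((r * c - 1) / x) ^ 2 ≤ 1 := by
  rw [div_pow, div_le_one (by positivity), hx2]
  nlinarith [mul_nonneg (sq_nonneg r) (sub_nonneg.mpr hc)]

lemma sq_sub_one_sub_div_sq (hx : x ≠ 0) (hx2 : x ^ 2 = r ^ 2 + 1 - 2 * r * c) :
    r ^ 2 - (1 - ((r * c - 1) / x) ^ 2) = (r * (r - c) / x) ^ 2 := by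
  field_simp
  linear_combination (r ^ 2 - 1) * hx2

lemma div_mul_div_add_one_sub_sq (hx : x ≠ 0) (hx2 : x ^ 2 = r ^ 2 + 1 - 2 * r * c) :
    (r * c - 1) / x * (r * (r - c) / x) + (1 - ((r * c - 1) / x) ^ 2) = r * c := by
  field_simp
  linear_combination (1 - r * c) * hx2

end ApproachAngle

open ApproachAngle in
theorem r_cos_relation_general (r ψ θ : ℝ) (hr : 1 < r)
    (x β : ℝ → ℝ)
    (hx : ∀ θ, x θ = Real.sqrt (r ^ 2 + 1 - 2 * r * Real.cos (θ - ψ)))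
    (hβ : ∀ θ, β θ = Real.arcsin ((r * Real.cos (θ - ψ) - 1) / x θ)) :
    r * Real.cos (θ - ψ)
      = Real.sin (β θ) * Real.sqrt (r ^ 2 - Real.cos (β θ) ^ 2) + Real.cos (β θ) ^ 2 := by
  set c := cos (θ - ψ)
  have hc : c ≤ 1 := cos_le_one _
  have hdist : 0 < r ^ 2 + 1 - 2 * r * c := by nlinarith
  have hxpos : 0 < x θ := by rw [hx]; exact sqrt_pos.mpr hdist
  have hx2 : x θ ^ 2 = r ^ 2 + 1 - 2 * r * c := by rw [hx]; exact sq_sqrt hdist.le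
  set s := (r * c - 1) / x θ
  have hs : s ^ 2 ≤ 1 := div_sq_le_one (cos_sq_le_one _) hxpos hx2
  obtain ⟨hs₁, hs₂⟩ := abs_le.mp ((sq_le_one_iff_abs_le_one s).mp hs)
  have hroot : 0 ≤ r * (r - c) / x θ := div_nonneg (by nlinarith) hxpos.le
  rw [hβ, sin_arcsin hs₁ hs₂, cos_arcsin_sq hs, sq_sub_one_sub_div_sq hxpos.ne' hx2,
    sqrt_sq hroot, div_mul_div_add_one_sub_sq hxpos.ne' hx2]

/-- With `x(θ) = √(r² + 1 − 2 r cos (θ − ψ))` and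
`β(θ) = arcsin ((r cos (θ − ψ) − 1)/x(θ))`, for `θ − ψ ∈ [0, arccos (1/r)]` one has
`r cos (θ − ψ) = sin β(θ) · √(r² − cos² β(θ)) + cos² β(θ)`. -/
theorem r_cos_relation (r ψ θ : ℝ) (hr : 1 < r)
    (hθ : θ - ψ ∈ Set.Icc 0 (Real.arccos (1 / r)))
    (x β : ℝ → ℝ)
    (hx : ∀ θ, x θ = Real.sqrt (r ^ 2 + 1 - 2 * r * Real.cos (θ - ψ)))
    (hβ : ∀ θ, β θ = Real.arcsin ((r * Real.cos (θ - ψ) - 1) / x θ)) :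
    r * Real.cos (θ - ψ)
      = Real.sin (β θ) * Real.sqrt (r ^ 2 - Real.cos (β θ) ^ 2) + Real.cos (β θ) ^ 2 :=
  r_cos_relation_general r ψ θ hr x β hx hβ
end
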